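/- If T is the closed subsemigroup of βG of ultrafilters extending a filter F, p ∈ K(T) (the smallest two-sided ideal of T), and A ∈ p, then the set A/p = {x ∈ G : x⁻¹A ∈ p} is F-syndetic. -/

import Mathlib

/-!
Inside the compact right-topological semigroup `T`, the smallest ideal is the union of the
minimal left ideals, so `p` lies in a minimal left ideal `L`, and then `L = T q p` for every
`q ∈ T`. Writing `p = s q p` and intersecting `A ∈ s q p` with `V ∈ s` produces, for every
`q ∈ T`, a point `x ∈ V` with `x⁻¹(A/p) ∈ q`. By compactness of `T` finitely many `x ∈ V`
suffice for all `q` at once, and a set lying in every ultrafilter extending `F` lies in `F`.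
-/

/-- A filter on a set `G` in the sense of the paper. -/
def IsFilterOn {G : Type*} (F : Set (Set G)) : Prop :=
  ∅ ∉ F ∧ Set.univ ∈ F ∧ (∀ A B : Set G, A ∈ F → A ⊆ B → B ∈ F) ∧
    (∀ A B : Set G, A ∈ F → B ∈ F → A ∩ B ∈ F)

/-- An ultrafilter: a filter such that for each set `A`, either `A` or its
complement belongs to the collection. -/
def IsUltraOn {G : Type*} (U : Set (Set G)) : Prop :=
  IsFilterOn U ∧ ∀ A : Set G, A ∈ U ∨ Aᶜ ∈ U

/-- The (ultra)filter product: `A ∈ F·G` iff `{x : {y : x·y ∈ A} ∈ G} ∈ F`. -/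
def filterProd {G : Type*} [Mul G] (F₁ F₂ : Set (Set G)) : Set (Set G) :=
  {A | {x | {y | x * y ∈ A} ∈ F₂} ∈ F₁}

/-- `T = closure of F` in `βG`: the set of all ultrafilters extending the filter `F`. -/
def extendingUltra {G : Type*} (F : Set (Set G)) : Set (Set (Set G)) :=
  {U | IsUltraOn U ∧ F ⊆ U}

/-- `I` is a (two-sided) ideal of the subsemigroup `T` of `βG`. -/
def IsIdealOf {G : Type*} [Mul G] (T I : Set (Set (Set G))) : Prop :=
  I.Nonempty ∧ I ⊆ T ∧
    ∀ p ∈ T, ∀ q ∈ I, filterProd p q ∈ I ∧ filterProd q p ∈ I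

/-- `K` is the smallest two-sided ideal `K(T)` of `T`. -/
def IsSmallestIdealOf {G : Type*} [Mul G] (T K : Set (Set (Set G))) : Prop :=
  IsIdealOf T K ∧ ∀ I, IsIdealOf T I → K ⊆ I

/-- `K⁻¹A = {k⁻¹a : k ∈ K, a ∈ A}`. -/
def invMulSet {G : Type*} [Group G] (K A : Set G) : Set G :=
  {x | ∃ k ∈ K, ∃ a ∈ A, x = k⁻¹ * a}

/-- `B` is `F`-syndetic: for every `V ∈ F` there is a finite non-empty
`K ⊆ V` with `K⁻¹B ∈ F`. -/
def FSyndetic {G : Type*} [Group G] (F : Set (Set G)) (B : Set G) : Prop :=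
  ∀ V ∈ F, ∃ K : Finset G, K.Nonempty ∧ ↑K ⊆ V ∧ invMulSet (↑K) B ∈ F


open Filter Set

attribute [local instance] Ultrafilter.mul Ultrafilter.semigroup

section LeftIdeal

variable {M : Type*} [Semigroup M]

def IsLeftIdealIn (T : Subsemigroup M) (L : Set M) : Prop :=
  L.Nonempty ∧ L ⊆ T ∧ ∀ u ∈ T, ∀ v ∈ L, u * v ∈ L

def IsIdealIn (T : Subsemigroup M) (I : Set M) : Prop :=
  I.Nonempty ∧ I ⊆ T ∧ ∀ u ∈ T, ∀ v ∈ I, u * v ∈ I ∧ v * u ∈ I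

variable {T : Subsemigroup M}

theorem isLeftIdealIn_image_mul_right {r : M} (hr : r ∈ T) :
    IsLeftIdealIn T ((· * r) '' T) := by
  refine ⟨⟨r * r, r, hr, rfl⟩, ?_, ?_⟩
  · rintro _ ⟨s, hs, rfl⟩
    exact T.mul_mem hs hr
  · rintro u hu _ ⟨s, hs, rfl⟩
    exact ⟨u * s, T.mul_mem hu hs, mul_assoc u s r⟩

theorem IsLeftIdealIn.image_mul_right_subset {L : Set M} (hL : IsLeftIdealIn T L) {r : M}
    (hr : r ∈ L) : (· * r) '' T ⊆ L := by
  rintro _ ⟨s, hs, rfl⟩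
  exact hL.2.2 s hs r hr

namespace Minimal

variable {L : Set M} (hL : Minimal (IsLeftIdealIn T) L)
include hL

theorem image_mul_right_eq {r : M} (hr : r ∈ L) : (· * r) '' T = L :=
  hL.eq_of_subset (isLeftIdealIn_image_mul_right (hL.prop.2.1 hr))
    (hL.prop.image_mul_right_subset hr)

theorem exists_mul_mul_eq {u : M} (hu : u ∈ L) {q : M} (hq : q ∈ T) :
    ∃ s ∈ T, s * (q * u) = u := by
  rwa [← hL.image_mul_right_eq (hL.prop.2.2 q hq u hu)] at hu

theorem image_mul_right {v : M} (hv : v ∈ T) : Minimal (IsLeftIdealIn T) ((· * v) '' L) := by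
  obtain ⟨l, hl⟩ := hL.prop.1
  refine ⟨⟨⟨l * v, l, hl, rfl⟩, ?_, ?_⟩, fun L' hL' hsub => ?_⟩
  · rintro _ ⟨s, hs, rfl⟩
    exact T.mul_mem (hL.prop.2.1 hs) hv
  · rintro u hu _ ⟨s, hs, rfl⟩
    exact ⟨u * s, hL.prop.2.2 u hu s hs, mul_assoc u s v⟩
  -- `L v = (T r) v = T (r v)` for any `r v ∈ L'`.
  obtain ⟨_, hrv⟩ := hL'.1
  obtain ⟨r, hr, rfl⟩ := hsub hrv
  rintro _ ⟨s, hs, rfl⟩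
  rw [← hL.image_mul_right_eq hr] at hs
  obtain ⟨t, ht, rfl⟩ := hs
  show t * r * v ∈ L'
  rw [mul_assoc]
  exact hL'.2.2 t ht _ hrv

end Minimal

variable [TopologicalSpace M] [CompactSpace M]

theorem isLeftIdealIn_sInter_of_isChain {c : Set (Set M)}
    (hcS : c ⊆ {L | IsLeftIdealIn T L ∧ IsClosed L}) (hc : IsChain (· ⊆ ·) c) (hne : c.Nonempty) :
    IsLeftIdealIn T (⋂₀ c) := by
  have : Nonempty c := hne.to_subtype
  refine ⟨?_, ?_, fun u hu v hv L hL => (hcS hL).1.2.2 u hu v (hv L hL)⟩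
  · refine IsCompact.nonempty_sInter_of_directed_nonempty_isCompact_isClosed
      (fun a ha b hb => (hc.total ha hb).elim (fun h => ⟨a, ha, subset_rfl, h⟩)
        fun h => ⟨b, hb, h, subset_rfl⟩)
      (fun L hL => (hcS hL).1.1) (fun L hL => (hcS hL).2.isCompact) (fun L hL => (hcS hL).2)
  · obtain ⟨L, hL⟩ := hne
    exact (sInter_subset_of_mem hL).trans (hcS hL).1.2.1

variable [T2Space M] (hcont : ∀ r : M, Continuous (· * r))
include hcont

theorem exists_minimal_isLeftIdealIn (hT : IsClosed (T : Set M)) (hne : (T : Set M).Nonempty) :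
    ∃ L, Minimal (IsLeftIdealIn T) L := by
  obtain ⟨L, -, hL⟩ := zorn_superset_nonempty {L | IsLeftIdealIn T L ∧ IsClosed L}
    (fun c hcS hc hne => ⟨⋂₀ c, ⟨isLeftIdealIn_sInter_of_isChain hcS hc hne,
      isClosed_sInter fun L hL => (hcS hL).2⟩, fun _ => sInter_subset_of_mem⟩)
    T ⟨⟨hne, subset_rfl, fun _ hu _ hv => T.mul_mem hu hv⟩, hT⟩
  refine ⟨L, hL.prop.1, fun L' hL' hsub => ?_⟩
  -- Every left ideal contains a closed one, namely `T r` for any of its points `r`.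
  obtain ⟨r, hr⟩ := hL'.1
  have hrL' := hL'.image_mul_right_subset hr
  exact (hL.2 ⟨isLeftIdealIn_image_mul_right (hL'.2.1 hr),
    (hT.isCompact.image (hcont r)).isClosed⟩ (hrL'.trans hsub)).trans hrL'

theorem isIdealIn_sUnion_minimal (hT : IsClosed (T : Set M)) (hne : (T : Set M).Nonempty) :
    IsIdealIn T (⋃₀ {L | Minimal (IsLeftIdealIn T) L}) := by
  obtain ⟨L₀, hL₀⟩ := exists_minimal_isLeftIdealIn hcont hT hne
  refine ⟨hL₀.prop.1.mono (subset_sUnion_of_mem hL₀), sUnion_subset fun L hL => hL.prop.2.1, ?_⟩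
  rintro u hu v ⟨L, hL, hv⟩
  exact ⟨⟨L, hL, hL.prop.2.2 u hu v hv⟩, ⟨_, hL.image_mul_right hu, v, hv, rfl⟩⟩

end LeftIdeal

theorem Ultrafilter.isClosed_setOf_coe_le {α : Type*} (f : Filter α) :
    IsClosed {u : Ultrafilter α | ↑u ≤ f} := by
  have : {u : Ultrafilter α | ↑u ≤ f} = ⋂ s ∈ f, {u | s ∈ u} := by
    ext u
    simp [Filter.le_def]
  rw [this]
  exact isClosed_biInter fun s _ => ultrafilter_isClosed_basic s

theorem Filter.exists_finset_biUnion_mem_of_forall_ultrafilter {α ι : Type*} {f : Filter α}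
    {S : ι → Set α} {V : Set ι} (h : ∀ u : Ultrafilter α, ↑u ≤ f → ∃ i ∈ V, S i ∈ u) :
    ∃ K : Finset ι, ↑K ⊆ V ∧ ⋃ i ∈ K, S i ∈ f := by
  obtain ⟨b, hbV, hb, hcover⟩ :=
    (Ultrafilter.isClosed_setOf_coe_le f).isCompact.elim_finite_subcover_image (b := V)
      (c := fun i => {u : Ultrafilter α | S i ∈ u}) (fun i _ => ultrafilter_isOpen_basic _)
      fun u hu => by simpa using h u hu
  refine ⟨hb.toFinset, by simpa using hbV, mem_iff_ultrafilter.2 fun u hu => ?_⟩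
  obtain ⟨i, hi, hiu⟩ := mem_iUnion₂.1 (hcover hu)
  exact mem_of_superset hiu (subset_biUnion_of_mem (u := S) (hb.mem_toFinset.2 hi))

theorem Ultrafilter.exists_mem_preimage_mul_mem {G : Type*} [Semigroup G]
    {s q u : Ultrafilter G} (h : s * (q * u) = u) {A V : Set G} (hA : A ∈ u) (hV : V ∈ s) :
    ∃ x ∈ V, {z | {y | x * z * y ∈ A} ∈ u} ∈ q := by
  rw [← h] at hA
  obtain ⟨x, hxV, hx⟩ := Ultrafilter.nonempty_of_mem (inter_mem hV hA)
  refine ⟨x, hxV, ?_⟩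
  simp only [mul_assoc]
  exact hx

section FilterOn

variable {G : Type*}

def IsFilterOn.toFilter {F : Set (Set G)} (hF : IsFilterOn F) : Filter G where
  sets := F
  univ_sets := hF.2.1
  sets_of_superset hA hAB := hF.2.2.1 _ _ hA hAB
  inter_sets hA hB := hF.2.2.2 _ _ hA hB

def IsUltraOn.toUltrafilter {U : Set (Set G)} (hU : IsUltraOn U) : Ultrafilter G :=
  Ultrafilter.ofComplNotMemIff hU.1.toFilter fun s =>
    ⟨(hU.2 s).resolve_right, fun hs hsc => hU.1.1 (by simpa using hU.1.2.2.2 _ _ hs hsc)⟩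

theorem isUltraOn_sets (u : Ultrafilter G) : IsUltraOn (u : Filter G).sets :=
  ⟨⟨u.empty_notMem, univ_mem, fun _ _ hA hAB => mem_of_superset hA hAB,
    fun _ _ hA hB => inter_mem hA hB⟩, u.mem_or_compl_mem⟩

theorem sets_mem_extendingUltra_iff {F : Set (Set G)} (hF : IsFilterOn F) (u : Ultrafilter G) :
    (u : Filter G).sets ∈ extendingUltra F ↔ ↑u ≤ hF.toFilter :=
  ⟨fun h _ hs => h.2 hs, fun h => ⟨isUltraOn_sets u, fun _ hs => h hs⟩⟩

theorem extendingUltra_eq_image {F : Set (Set G)} (hF : IsFilterOn F) :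
    extendingUltra F = (Filter.sets ∘ Ultrafilter.toFilter) '' {u | ↑u ≤ hF.toFilter} := by
  ext r
  refine ⟨fun hr => ⟨hr.1.toUltrafilter, fun _ hs => hr.2 hs, rfl⟩, ?_⟩
  rintro ⟨u, hu, rfl⟩
  exact (sets_mem_extendingUltra_iff hF u).2 hu

variable [Semigroup G]

theorem filterProd_sets (u v : Ultrafilter G) :
    filterProd (u : Filter G).sets (v : Filter G).sets = (↑(u * v) : Filter G).sets :=
  rfl

theorem IsIdealIn.isIdealOf_image {T : Subsemigroup (Ultrafilter G)} {I : Set (Ultrafilter G)}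
    (hI : IsIdealIn T I) :
    IsIdealOf ((Filter.sets ∘ Ultrafilter.toFilter) '' T)
      ((Filter.sets ∘ Ultrafilter.toFilter) '' I) := by
  refine ⟨hI.1.image _, image_mono hI.2.1, ?_⟩
  rintro _ ⟨u, hu, rfl⟩ _ ⟨v, hv, rfl⟩
  exact ⟨⟨u * v, (hI.2.2 u hu v hv).1, rfl⟩, ⟨v * u, (hI.2.2 u hu v hv).2, rfl⟩⟩

end FilterOn

theorem invMulSet_eq_biUnion {G : Type*} [Group G] (K B : Set G) :
    invMulSet K B = ⋃ x ∈ K, {z | x * z ∈ B} := by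
  ext z
  simp only [invMulSet, mem_ofPred_eq, mem_iUnion, exists_prop]
  refine exists_congr fun x => and_congr_right fun _ => ⟨?_, fun hz => ⟨_, hz, by group⟩⟩
  rintro ⟨a, ha, rfl⟩
  simpa using ha

/-- (Shuungula–Zelenyuk–Zelenyuk) If `T` is the closed subsemigroup of `βG` of
ultrafilters extending a filter `F`, `p ∈ K(T)` and `A ∈ p`, then
`A/p = {x : x⁻¹A ∈ p}` is `F`-syndetic. -/
theorem syndetic_of_smallest_ideal {G : Type*} [Group G]
    (F : Set (Set G)) (hF : IsFilterOn F)
    (hclosed : ∀ p q, p ∈ extendingUltra F → q ∈ extendingUltra F →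
      filterProd p q ∈ extendingUltra F)
    (K : Set (Set (Set G))) (hK : IsSmallestIdealOf (extendingUltra F) K)
    (p : Set (Set G)) (hp : p ∈ K) (A : Set G) (hA : A ∈ p) :
    FSyndetic F {x | {y | x * y ∈ A} ∈ p} := by
  let T : Subsemigroup (Ultrafilter G) :=
    { carrier := {u | ↑u ≤ hF.toFilter}
      mul_mem' := fun {u v} hu hv => by
        rw [mem_ofPred_eq, ← sets_mem_extendingUltra_iff hF, ← filterProd_sets]
        exact hclosed _ _ ((sets_mem_extendingUltra_iff hF u).2 hu)
          ((sets_mem_extendingUltra_iff hF v).2 hv) }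
  have hT : extendingUltra F = (Filter.sets ∘ Ultrafilter.toFilter) '' T :=
    extendingUltra_eq_image hF
  have hTne : (T : Set (Ultrafilter G)).Nonempty := by
    obtain ⟨k, hk⟩ := hK.1.1
    obtain ⟨u, hu, -⟩ := hT ▸ hK.1.2.1 hk
    exact ⟨u, hu⟩
  obtain ⟨u, ⟨L, hL, huL⟩, rfl⟩ := hK.2 _ (hT ▸ (isIdealIn_sUnion_minimal
    Ultrafilter.continuous_mul_left (Ultrafilter.isClosed_setOf_coe_le _) hTne).isIdealOf_image) hp
  intro V hV
  obtain ⟨K, hKV, hKB⟩ := exists_finset_biUnion_mem_of_forall_ultrafilter fun q hq => by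
    obtain ⟨s, hs, hsqu⟩ := hL.exists_mul_mul_eq huL hq
    exact Ultrafilter.exists_mem_preimage_mul_mem hsqu hA (hs hV)
  refine ⟨K, Finset.nonempty_iff_ne_empty.2 ?_, hKV, by rwa [invMulSet_eq_biUnion]⟩
  rintro rfl
  have hempty : (∅ : Set G) ∈ hF.toFilter := by simpa using hKB
  exact hF.1 hempty
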